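/- (Theorem 3) The tontine fund (I, π, f) with π_{n+1} > 0 is actuarially fair for each of its n participants if and only if for every i = 1, …, n one has π_i / π_{n+1} = E[ f_i I_i / (Σ_{j=1}^{n} f_j I_j) | I_{n+1} = 0 ] · P[I_{n+1} = 0] / P[I_{n+1} = 1]. -/

import Mathlib

open MeasureTheory Finset

/-!
Everything is driven by the survivor share `gᵢ = fᵢ Iᵢ / ∑ⱼ fⱼ Iⱼ`. Participant `i`'s payout is
`(1 + R) (∑ⱼ πⱼ + π_{n+1}) gᵢ`: when somebody survives the administrator's weight is multiplied
by `I_{n+1} = 0`, and when nobody does the payout is `0 = gᵢ`. Hence fairness says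
`πᵢ = (∑ⱼ πⱼ + π_{n+1}) Jᵢ` with `Jᵢ = E[gᵢ; I_{n+1} = 0]`. The shares sum to one on
`{I_{n+1} = 0}`, so `∑ᵢ Jᵢ = P[I_{n+1} = 0] = 1 - P[I_{n+1} = 1]`, and summing the fairness
conditions gives `π_{n+1} = (∑ⱼ πⱼ + π_{n+1}) P[I_{n+1} = 1]`; dividing yields the ratios.
-/

theorem forall_eq_sum_add_mul_iff {ι : Type*} [Fintype ι] (π J : ι → ℝ) (a p : ℝ)
    (hp : p ≠ 0) (hJ : ∑ i, J i = 1 - p) :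
    (∀ i, π i = (∑ j, π j + a) * J i) ↔ ∀ i, π i * p = J i * a := by
  constructor
  · intro h i
    have hsum : ∑ j, π j = (∑ j, π j + a) * (1 - p) := by
      rw [← hJ, mul_sum]
      exact sum_congr rfl fun j _ => h j
    have ha : a = (∑ j, π j + a) * p := by linear_combination -hsum
    rw [h i]
    nth_rewrite 2 [ha]
    ring
  · intro h i
    have hsum : (∑ j, π j) * p = (1 - p) * a := by
      rw [sum_mul, ← hJ, sum_mul]
      exact sum_congr rfl fun j _ => h j
    have hpool : (∑ j, π j + a) * p = a := by linear_combination hsum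
    apply mul_right_cancel₀ hp
    linear_combination h i - J i * hpool

section SurvivorShare

variable {ι : Type*} [Fintype ι]

noncomputable def survivorShare (f x : ι → ℝ) (i : ι) : ℝ :=
  f i * x i / ∑ j, f j * x j

variable {f x : ι → ℝ}

theorem prod_one_sub_eq_zero_or_one (hx : ∀ j, x j = 0 ∨ x j = 1) :
    ∏ j, (1 - x j) = 0 ∨ ∏ j, (1 - x j) = 1 := by
  refine prod_induction _ (fun y => y = 0 ∨ y = 1) ?_ (Or.inr rfl) fun j _ => ?_
  · rintro a b (rfl | rfl) (rfl | rfl) <;> simp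
  · rcases hx j with h | h <;> simp [h]

theorem prod_one_sub_eq_zero_of_eq_one {i : ι} (hi : x i = 1) : ∏ j, (1 - x j) = 0 :=
  prod_eq_zero (mem_univ i) (by rw [hi, sub_self])

theorem survivorShare_eq_zero_of_prod_one_sub_ne_zero {i : ι} (hi : x i = 0 ∨ x i = 1)
    (h : ∏ j, (1 - x j) ≠ 0) : survivorShare f x i = 0 := by
  rcases hi with hi | hi
  · simp [survivorShare, hi]
  · exact absurd (prod_one_sub_eq_zero_of_eq_one hi) h

theorem div_sum_add_mul_prod_one_sub_eq_survivorShare {i : ι} (hi : x i = 0 ∨ x i = 1) (c : ℝ) :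
    f i * x i / (∑ j, f j * x j + c * ∏ j, (1 - x j)) = survivorShare f x i := by
  rcases hi with hi | hi
  · simp [survivorShare, hi]
  · rw [prod_one_sub_eq_zero_of_eq_one hi, mul_zero, add_zero, survivorShare]

theorem survivorShare_nonneg (hf : ∀ j, 0 ≤ f j) (hx : ∀ j, 0 ≤ x j) (i : ι) :
    0 ≤ survivorShare f x i :=
  div_nonneg (mul_nonneg (hf i) (hx i)) (sum_nonneg fun j _ => mul_nonneg (hf j) (hx j))

theorem survivorShare_le_one (hf : ∀ j, 0 ≤ f j) (hx : ∀ j, 0 ≤ x j) (i : ι) :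
    survivorShare f x i ≤ 1 :=
  div_le_one_of_le₀ (single_le_sum (fun j _ => mul_nonneg (hf j) (hx j)) (mem_univ i))
    (sum_nonneg fun j _ => mul_nonneg (hf j) (hx j))

theorem sum_survivorShare_of_prod_one_sub_eq_zero (hf : ∀ j, 0 < f j) (hx : ∀ j, 0 ≤ x j)
    (h : ∏ j, (1 - x j) = 0) : ∑ i, survivorShare f x i = 1 := by
  obtain ⟨j, -, hj⟩ := prod_eq_zero_iff.mp h
  have hpos : 0 < ∑ j, f j * x j :=
    sum_pos' (fun j _ => mul_nonneg (hf j).le (hx j))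
      ⟨j, mem_univ j, by rw [← sub_eq_zero.mp hj, mul_one]; exact hf j⟩
  unfold survivorShare
  rw [← sum_div, div_self hpos.ne']

end SurvivorShare

theorem compl_setOf_prod_one_sub_eq_zero {Ω ι : Type*} [Fintype ι] {I : ι → Ω → ℝ}
    (hI01 : ∀ j ω, I j ω = 0 ∨ I j ω = 1) :
    {ω | ∏ j, (1 - I j ω) = 0}ᶜ = {ω | ∏ j, (1 - I j ω) = 1} := by
  ext ω
  rcases prod_one_sub_eq_zero_or_one (hI01 · ω) with h | h <;> simp [h]

section Expectation

variable {Ω ι : Type*} [MeasurableSpace Ω] {P : Measure Ω} [Fintype ι] {f : ι → ℝ}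
  {I : ι → Ω → ℝ}

theorem measurable_survivorShare (hI : ∀ j, Measurable (I j)) (i : ι) :
    Measurable fun ω => survivorShare f (I · ω) i :=
  (measurable_const.mul (hI i)).div (Finset.measurable_sum _ fun j _ => measurable_const.mul (hI j))

theorem integrable_survivorShare [IsFiniteMeasure P] (hf : ∀ j, 0 ≤ f j)
    (hI0 : ∀ j ω, 0 ≤ I j ω) (hI : ∀ j, Measurable (I j)) (i : ι) :
    Integrable (fun ω => survivorShare f (I · ω) i) P := by
  refine (integrable_const (1 : ℝ)).mono' (measurable_survivorShare hI i).aestronglyMeasurable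
    (Filter.Eventually.of_forall fun ω => ?_)
  rw [Real.norm_eq_abs, abs_of_nonneg (survivorShare_nonneg hf (hI0 · ω) i)]
  exact survivorShare_le_one hf (hI0 · ω) i

theorem measurableSet_prod_one_sub_eq (hI : ∀ j, Measurable (I j)) (c : ℝ) :
    MeasurableSet {ω | ∏ j, (1 - I j ω) = c} :=
  (Finset.measurable_prod _ fun j _ => measurable_const.sub (hI j)) (measurableSet_singleton c)

theorem setIntegral_survivorShare_eq_integral (hI01 : ∀ j ω, I j ω = 0 ∨ I j ω = 1) (i : ι) :
    ∫ ω in {ω | ∏ j, (1 - I j ω) = 0}, survivorShare f (I · ω) i ∂P =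
      ∫ ω, survivorShare f (I · ω) i ∂P :=
  setIntegral_eq_integral_of_forall_compl_eq_zero fun ω hω =>
    survivorShare_eq_zero_of_prod_one_sub_ne_zero (hI01 i ω) hω

theorem sum_setIntegral_survivorShare [IsFiniteMeasure P] (hf : ∀ j, 0 < f j)
    (hI0 : ∀ j ω, 0 ≤ I j ω) (hI : ∀ j, Measurable (I j)) :
    ∑ i, ∫ ω in {ω | ∏ j, (1 - I j ω) = 0}, survivorShare f (I · ω) i ∂P =
      P.real {ω | ∏ j, (1 - I j ω) = 0} := by
  rw [← integral_finsetSum _ fun i _ =>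
    (integrable_survivorShare (fun j => (hf j).le) hI0 hI i).restrict]
  rw [setIntegral_congr_fun (measurableSet_prod_one_sub_eq hI 0) fun ω hω =>
    sum_survivorShare_of_prod_one_sub_eq_zero hf (hI0 · ω) hω]
  simp

end Expectation

theorem tontine_fairness_characterization_general
    {Ω : Type*} [MeasurableSpace Ω] (P : Measure Ω) [IsProbabilityMeasure P]
    (n : ℕ)
    (I : Fin n → Ω → ℝ) (hI01 : ∀ j ω, I j ω = 0 ∨ I j ω = 1)
    (hImeas : ∀ j, Measurable (I j))
    (Iadm : Ω → ℝ) (hIadm : ∀ ω, Iadm ω = ∏ j, (1 - I j ω))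
    (hadm0 : 0 < P {ω | Iadm ω = 1}) (hadm1 : P {ω | Iadm ω = 1} < 1)
    (π : Fin n → ℝ) (πadm : ℝ) (hπadm : 0 < πadm)
    (f : Fin n → ℝ) (hf : ∀ j, 0 < f j) (fadm : ℝ)
    (R : ℝ) (hR : 0 ≤ R)
    (W : Fin n → Ω → ℝ)
    (hW : ∀ i ω, W i ω =
      (1 + R) * ((∑ j, π j) + πadm) * (f i * I i ω) /
        ((∑ j, f j * I j ω) + fadm * Iadm ω)) :
    (∀ i, π i * (1 + R) = ∫ ω, W i ω ∂P) ↔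
    (∀ i, π i / πadm =
      ((∫ ω in {ω | Iadm ω = 0}, f i * I i ω / (∑ j, f j * I j ω) ∂P) /
          (P {ω | Iadm ω = 0}).toReal) *
        ((P {ω | Iadm ω = 0}).toReal / (P {ω | Iadm ω = 1}).toReal)) := by
  simp only [hIadm] at hadm0 hadm1 hW ⊢
  set S := {ω | ∏ j, (1 - I j ω) = 0}
  set J := fun i => ∫ ω in S, survivorShare f (I · ω) i ∂P
  have hI0 : ∀ j ω, 0 ≤ I j ω := fun j ω => by rcases hI01 j ω with h | h <;> simp [h]
  have hS : MeasurableSet S := measurableSet_prod_one_sub_eq hImeas 0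
  have hSc : Sᶜ = {ω | ∏ j, (1 - I j ω) = 1} := compl_setOf_prod_one_sub_eq_zero hI01
  have hp1 : 0 < P.real Sᶜ := by
    rw [hSc]; exact ENNReal.toReal_pos hadm0.ne' (measure_ne_top P _)
  have hp0 : 0 < P.real S := by
    have hp1_lt : P.real Sᶜ < 1 := by
      rw [hSc]
      simpa [Measure.real] using
        (ENNReal.toReal_lt_toReal (measure_ne_top P _) ENNReal.one_ne_top).2 hadm1
    linarith [probReal_compl_eq_one_sub (μ := P) hS]
  have hEW : ∀ i, ∫ ω, W i ω ∂P = (1 + R) * (∑ j, π j + πadm) * J i := fun i => by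
    have hWi : W i = fun ω => (1 + R) * (∑ j, π j + πadm) * survivorShare f (I · ω) i :=
      funext fun ω => by
        rw [hW, mul_div_assoc,
          div_sum_add_mul_prod_one_sub_eq_survivorShare (x := (I · ω)) (hI01 i ω)]
    rw [hWi, integral_const_mul, ← setIntegral_survivorShare_eq_integral hI01]
  have hJ : ∑ i, J i = 1 - P.real Sᶜ := by
    rw [probReal_compl_eq_one_sub hS, sub_sub_cancel]
    exact sum_setIntegral_survivorShare hf hI0 hImeas
  have h1R : (1 + R) ≠ 0 := by positivity
  calc (∀ i, π i * (1 + R) = ∫ ω, W i ω ∂P)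
      ↔ ∀ i, π i = (∑ j, π j + πadm) * J i := by
        simp_rw [hEW, mul_assoc, mul_comm (π _), mul_right_inj' h1R]
    _ ↔ ∀ i, π i * P.real Sᶜ = J i * πadm := forall_eq_sum_add_mul_iff π J πadm _ hp1.ne' hJ
    _ ↔ _ := forall_congr' fun i => by
        simp only [← measureReal_def]
        rw [div_mul_div_cancel₀ hp0.ne', ← hSc, div_eq_div_iff hπadm.ne' hp1.ne']
        rfl

/-- Theorem 3: the tontine fund is actuarially fair for each of its `n` participants if and
only if for every `i`:
`π_i / π_{n+1} = E[f_i I_i / (Σ_{j=1}^n f_j I_j) | I_{n+1}=0] · P[I_{n+1}=0]/P[I_{n+1}=1]`. -/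
theorem tontine_fairness_characterization
    {Ω : Type*} [MeasurableSpace Ω] (P : Measure Ω) [IsProbabilityMeasure P]
    (n : ℕ) (hn : 1 ≤ n)
    (I : Fin n → Ω → ℝ) (hI01 : ∀ j ω, I j ω = 0 ∨ I j ω = 1)
    (hImeas : ∀ j, Measurable (I j))
    (Iadm : Ω → ℝ) (hIadm : ∀ ω, Iadm ω = ∏ j, (1 - I j ω))
    (hadm0 : 0 < P {ω | Iadm ω = 1}) (hadm1 : P {ω | Iadm ω = 1} < 1)
    (π : Fin n → ℝ) (hπ : ∀ j, 0 < π j) (πadm : ℝ) (hπadm : 0 < πadm)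
    (f : Fin n → ℝ) (hf : ∀ j, 0 < f j) (fadm : ℝ) (hfadm : 0 < fadm)
    (R : ℝ) (hR : 0 ≤ R)
    (W : Fin n → Ω → ℝ)
    (hW : ∀ i ω, W i ω =
      (1 + R) * ((∑ j, π j) + πadm) * (f i * I i ω) /
        ((∑ j, f j * I j ω) + fadm * Iadm ω)) :
    (∀ i, π i * (1 + R) = ∫ ω, W i ω ∂P) ↔
    (∀ i, π i / πadm =
      ((∫ ω in {ω | Iadm ω = 0}, f i * I i ω / (∑ j, f j * I j ω) ∂P) /
          (P {ω | Iadm ω = 0}).toReal) *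
        ((P {ω | Iadm ω = 0}).toReal / (P {ω | Iadm ω = 1}).toReal)) :=
  tontine_fairness_characterization_general P n I hI01 hImeas Iadm hIadm hadm0 hadm1 π πadm hπadm f
    hf fadm R hR W hW
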